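/- Let t ≥ 1 be an integer and ξ a real number. Then (1/(2π)) ∫_{−∞}^{∞} exp(ξ(−1+is) + (−1+is)²/2) · (−1+is)^{t−1} ds = (−1)^{t−1} · H_{t−1}(ξ) · e^{−ξ²/2} / √(2π). -/

import Mathlib

open MeasureTheory Complex Polynomial Real

/-!
Let `Fₙ(s) = e^{ξu + u²/2} uⁿ` with `u = -1 + is`, and `Jₙ = ∫ Fₙ ds`.
Since `|e^{ξu + u²/2}|` is a multiple of `e^{-s²/2}`, every `Fₙ` is integrable,
and so is `F'ₙ = i (ξ Fₙ + Fₙ₊₁ + n Fₙ₋₁)`; hence `∫ F'ₙ = 0`, i.e.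
`Jₙ₊₁ = -ξ Jₙ - n Jₙ₋₁`. This is the three-term recurrence of `(-1)ⁿ Hₙ(ξ)`,
and `J₀ = √(2π) e^{-ξ²/2}` is a Gaussian integral.
-/

namespace Polynomial

theorem derivative_hermite_succ (n : ℕ) :
    derivative (hermite (n + 1)) = (n + 1 : ℤ[X]) * hermite n := by
  induction n with
  | zero => simp
  | succ n ih =>
    rw [hermite_succ (n + 1), derivative_sub, derivative_mul, derivative_X, one_mul, ih,
      derivative_mul, hermite_succ n]
    simp only [derivative_add, derivative_natCast, derivative_one]
    push_cast
    ring

theorem hermite_succ_succ (n : ℕ) :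
    hermite (n + 2) = X * hermite (n + 1) - (n + 1 : ℤ[X]) * hermite n := by
  rw [hermite_succ (n + 1), derivative_hermite_succ]

end Polynomial

theorem integrable_eval_mul_exp_neg_mul_sq {b : ℝ} (hb : 0 < b) (p : ℝ[X]) :
    Integrable fun x : ℝ => p.eval x * Real.exp (-b * x ^ 2) := by
  induction p using Polynomial.induction_on' with
  | add p q hp hq =>
    simp only [eval_add, add_mul]
    exact hp.add hq
  | monomial k a =>
    have hk :=
      integrable_rpow_mul_exp_neg_mul_sq hb (s := k) (neg_one_lt_zero.trans_le k.cast_nonneg)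
    simp_rw [Real.rpow_natCast] at hk
    simpa [mul_assoc] using hk.const_mul a

noncomputable def hermiteIntegrand (ξ : ℝ) (n : ℕ) (z : ℂ) : ℂ :=
  cexp (ξ * z + z ^ 2 / 2) * z ^ n

theorem hasDerivAt_hermiteIntegrand (ξ : ℝ) (n : ℕ) (z : ℂ) :
    HasDerivAt (hermiteIntegrand ξ n)
      (ξ * hermiteIntegrand ξ n z + hermiteIntegrand ξ (n + 1) z
        + n * hermiteIntegrand ξ (n - 1) z) z := by
  have hexp : HasDerivAt (fun z : ℂ => cexp (ξ * z + z ^ 2 / 2))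
      (cexp (ξ * z + z ^ 2 / 2) * (ξ + z)) z := by
    refine HasDerivAt.cexp ((((hasDerivAt_id' z).const_mul (ξ : ℂ)).add
      ((hasDerivAt_pow 2 z).div_const 2)).congr_deriv ?_)
    norm_num
  refine (hexp.mul (hasDerivAt_pow n z)).congr_deriv ?_
  simp only [hermiteIntegrand]
  rcases n with _ | n
  · push_cast
    ring
  · simp only [Nat.add_sub_cancel]
    push_cast
    ring

theorem norm_hermiteIntegrand_le (ξ : ℝ) (n : ℕ) (s : ℝ) :
    ‖hermiteIntegrand ξ n (-1 + I * s)‖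
      ≤ Real.exp (1 / 2 - ξ) * ((1 + s ^ 2) ^ n * Real.exp (-(1 / 2) * s ^ 2)) := by
  set u : ℂ := -1 + I * s
  have hre : (ξ * u + u ^ 2 / 2).re = (1 / 2 - ξ) + -(1 / 2) * s ^ 2 := by
    simp only [u, sq, add_re, add_im, mul_re, mul_im, neg_re, neg_im, one_re, one_im, I_re, I_im,
      ofReal_re, ofReal_im, div_ofNat_re]
    ring
  have hu : 1 ≤ ‖u‖ := by simpa [u] using abs_re_le_norm u
  have hpow : ‖u‖ ^ n ≤ (1 + s ^ 2) ^ n := by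
    calc ‖u‖ ^ n ≤ ‖u‖ ^ (2 * n) := pow_le_pow_right₀ hu (by omega)
      _ = (1 + s ^ 2) ^ n := by
        rw [pow_mul, Complex.sq_norm]
        simp only [u, normSq_apply, add_re, add_im, mul_re, mul_im, neg_re, neg_im, one_re, one_im,
          I_re, I_im, ofReal_re, ofReal_im]
        ring
  rw [hermiteIntegrand, norm_mul, norm_exp, hre, Real.exp_add, norm_pow]
  calc Real.exp (1 / 2 - ξ) * Real.exp (-(1 / 2) * s ^ 2) * ‖u‖ ^ n
      ≤ Real.exp (1 / 2 - ξ) * Real.exp (-(1 / 2) * s ^ 2) * (1 + s ^ 2) ^ n := by gcongr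
    _ = _ := by ring

theorem integrable_hermiteIntegrand (ξ : ℝ) (n : ℕ) :
    Integrable fun s : ℝ => hermiteIntegrand ξ n (-1 + I * s) := by
  have hmaj := (integrable_eval_mul_exp_neg_mul_sq (b := 1 / 2) (by norm_num)
    ((1 + X ^ 2) ^ n)).const_mul (Real.exp (1 / 2 - ξ))
  refine hmaj.mono' (by unfold hermiteIntegrand; fun_prop) (.of_forall fun s => ?_)
  simpa using norm_hermiteIntegrand_le ξ n s

noncomputable def hermiteIntegral (ξ : ℝ) (n : ℕ) : ℂ :=
  ∫ s : ℝ, hermiteIntegrand ξ n (-1 + I * s)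

theorem hermiteIntegral_zero (ξ : ℝ) :
    hermiteIntegral ξ 0 = ((√(2 * π) * Real.exp (-ξ ^ 2 / 2) : ℝ) : ℂ) := by
  have hexp (s : ℝ) : hermiteIntegrand ξ 0 (-1 + I * s)
      = cexp ((-1 / 2 : ℂ) * s ^ 2 + I * (ξ - 1) * s + (1 / 2 - ξ)) := by
    rw [hermiteIntegrand, pow_zero, mul_one]
    congr 1
    linear_combination ((s : ℂ) ^ 2 / 2) * I_sq
  simp only [hermiteIntegral, hexp]
  rw [integral_cexp_quadratic (by norm_num), Real.sqrt_eq_rpow, ofReal_mul,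
    ofReal_cpow (by positivity), ofReal_exp]
  congr 1
  · push_cast
    ring_nf
  · push_cast
    congr 1
    linear_combination ((ξ - 1 : ℂ) ^ 2 / 2) * I_sq

theorem hermiteIntegral_succ (ξ : ℝ) (n : ℕ) :
    hermiteIntegral ξ (n + 1)
      = -ξ * hermiteIntegral ξ n - n * hermiteIntegral ξ (n - 1) := by
  have hderiv (s : ℝ) : HasDerivAt (fun s : ℝ => hermiteIntegrand ξ n (-1 + I * s))
      ((ξ * hermiteIntegrand ξ n (-1 + I * s) + hermiteIntegrand ξ (n + 1) (-1 + I * s)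
        + n * hermiteIntegrand ξ (n - 1) (-1 + I * s)) * I) s := by
    refine (hasDerivAt_hermiteIntegrand ξ n _).comp s ?_
    simpa using ((hasDerivAt_id (s : ℂ)).comp_ofReal.const_mul I).const_add (-1 : ℂ)
  have hint (m : ℕ) := integrable_hermiteIntegrand ξ m
  have hzero := integral_eq_zero_of_hasDerivAt_of_integrable hderiv
    (((((hint n).const_mul _).add (hint (n + 1))).add ((hint (n - 1)).const_mul _)).mul_const I)
    (hint n)
  rw [integral_mul_const, integral_add, integral_add, integral_const_mul, integral_const_mul]
    at hzero
  · simp only [hermiteIntegral]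
    linear_combination (mul_eq_zero.mp hzero).resolve_right I_ne_zero
  all_goals
    first | exact hint _ | exact (hint _).const_mul _ | exact ((hint _).const_mul _).add (hint _)

theorem hermiteIntegral_eq (ξ : ℝ) (n : ℕ) :
    hermiteIntegral ξ n
      = ((√(2 * π) * Real.exp (-ξ ^ 2 / 2) * ((-1) ^ n * aeval ξ (hermite n)) : ℝ) : ℂ) := by
  induction n using Nat.twoStepInduction with
  | zero => simp [hermiteIntegral_zero]
  | one =>
    rw [hermiteIntegral_succ, hermiteIntegral_zero]
    simp only [hermite_one, aeval_X]
    push_cast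
    ring
  | more n ih ih' =>
    rw [hermiteIntegral_succ, Nat.add_sub_cancel, ih, ih', hermite_succ_succ]
    simp only [map_sub, map_mul, aeval_X, map_add, map_natCast, map_one]
    push_cast
    ring

theorem stmt_9 (t : ℕ) (ξ : ℝ) :
    (1 / (2 * (Real.pi : ℂ))) *
      ∫ s : ℝ,
        Complex.exp ((ξ : ℂ) * (-1 + Complex.I * (s : ℂ)) +
            (-1 + Complex.I * (s : ℂ)) ^ 2 / 2) *
          (-1 + Complex.I * (s : ℂ)) ^ (t - 1)
      = (((-1 : ℝ) ^ (t - 1) * (Polynomial.aeval ξ (Polynomial.hermite (t - 1))) *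
            Real.exp (-ξ ^ 2 / 2) / Real.sqrt (2 * Real.pi) : ℝ) : ℂ) := by
  have hJ := hermiteIntegral_eq ξ (t - 1)
  simp only [hermiteIntegral, hermiteIntegrand] at hJ
  rw [hJ, ← ofReal_ofNat, ← ofReal_mul, ← ofReal_one, ← ofReal_div, ← ofReal_mul]
  congr 1
  have hsq : √(2 * π) ^ 2 = 2 * π := sq_sqrt (by positivity)
  field_simp
  rw [hsq]
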